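/- Fix a prime number p and let R(p) = {g/p^n : g ∈ ℤ[x], n ≥ 0, g/p^n ∈ Int(ℤ)}. Then every prime number q ≠ p is a prime element of R(p). -/

import Mathlib

/-!
Write `f ∈ R(p)` as `a / p^k` with `a ∈ ℤ[X]`. If `A * B = q * D` in `R(p)`, clearing the
`p`-power denominators gives `p^m * a * b = q * d * p^(k+l)` in `ℤ[X]`, where the constant `q` is
prime and coprime to `p`; hence `q ∣ a` or `q ∣ b`, say `q ∣ a`. Then `A / q` has a `p`-power
denominator, and it is integer-valued because both `q * (A / q) = A` and `p^k * (A / q) = a / q`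
are, while `q` and `p^k` are coprime. So `q ∣ A` in `R(p)`.
-/

open Polynomial

def IsIntValued (f : ℚ[X]) : Prop := ∀ n : ℤ, ∃ m : ℤ, f.eval (n : ℚ) = m

def HasPowDenom (p : ℕ) (f : ℚ[X]) : Prop :=
  ∃ (g : ℤ[X]) (k : ℕ), f = C ((p : ℚ) ^ k)⁻¹ * g.map (Int.castRingHom ℚ)

theorem exists_int_eq_of_isCoprime {a b : ℤ} (hab : IsCoprime a b) {x : ℚ}
    (ha : ∃ m : ℤ, a * x = m) (hb : ∃ m : ℤ, b * x = m) : ∃ m : ℤ, x = m := by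
  obtain ⟨u, v, huv⟩ := hab
  obtain ⟨m, hm⟩ := ha
  obtain ⟨n, hn⟩ := hb
  have huv' : (u : ℚ) * a + v * b = 1 := by exact_mod_cast huv
  refine ⟨u * m + v * n, ?_⟩
  push_cast
  linear_combination (-x) * huv' + (u : ℚ) * hm + (v : ℚ) * hn

theorem IsIntValued.of_isCoprime {a b : ℤ} (hab : IsCoprime a b) {f : ℚ[X]}
    (ha : IsIntValued (C (a : ℚ) * f)) (hb : IsIntValued (C (b : ℚ) * f)) : IsIntValued f :=
  fun n ↦ exists_int_eq_of_isCoprime hab (by simpa using ha n) (by simpa using hb n)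

theorem isIntValued_map_intCast (g : ℤ[X]) : IsIntValued (g.map (Int.castRingHom ℚ)) :=
  fun n ↦ ⟨g.eval n, by simp [eval_intCast_map]⟩

theorem C_pow_mul_C_inv_pow_mul {K : Type*} [Field K] {x : K} (hx : x ≠ 0) (k : ℕ) (g : K[X]) :
    C x ^ k * (C (x ^ k)⁻¹ * g) = g := by
  rw [← mul_assoc, ← C_pow, ← C_mul, mul_inv_cancel₀ (pow_ne_zero k hx), C_1, one_mul]

theorem HasPowDenom.exists_pow_mul_eq {p : ℕ} (hp : p ≠ 0) {f : ℚ[X]} (hf : HasPowDenom p f) :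
    ∃ (g : ℤ[X]) (k : ℕ), C (p : ℚ) ^ k * f = g.map (Int.castRingHom ℚ) := by
  obtain ⟨g, k, rfl⟩ := hf
  exact ⟨g, k, C_pow_mul_C_inv_pow_mul (by exact_mod_cast hp) k _⟩

theorem not_isUnit_of_coe_eq_C {S : Subring ℚ[X]} (hS : ∀ f ∈ S, IsIntValued f) {Q : S} {q : ℤ}
    (hQ : (Q : ℚ[X]) = C (q : ℚ)) (hq : ¬IsUnit q) : ¬IsUnit Q := by
  rw [isUnit_iff_exists_inv]
  rintro ⟨V, hQV⟩
  obtain ⟨m, hm⟩ := hS V V.2 0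
  have hQV' : C (q : ℚ) * (V : ℚ[X]) = 1 := by rw [← hQ]; exact_mod_cast congrArg Subtype.val hQV
  have hqm : (q : ℚ) * m = 1 := by simpa [← hm] using congrArg (eval 0) hQV'
  exact hq (.of_mul_eq_one m (by exact_mod_cast hqm))

section

variable {p : ℕ} {Rp : Subring ℚ[X]} {q : ℤ}

theorem dvd_of_C_dvd_numerator (hRp : ∀ f, f ∈ Rp ↔ IsIntValued f ∧ HasPowDenom p f)
    (hp : p ≠ 0) (hqp : IsCoprime q p) {Q A : Rp} (hQ : (Q : ℚ[X]) = C (q : ℚ)) {a : ℤ[X]}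
    {k : ℕ} (hA : C (p : ℚ) ^ k * A = a.map (Int.castRingHom ℚ)) (hqa : C q ∣ a) : Q ∣ A := by
  obtain ⟨a', rfl⟩ := hqa
  set G : ℚ[X] := C ((p : ℚ) ^ k)⁻¹ * a'.map (Int.castRingHom ℚ)
  have hG : C (p : ℚ) ^ k * G = a'.map (Int.castRingHom ℚ) :=
    C_pow_mul_C_inv_pow_mul (by exact_mod_cast hp) k _
  have hAG : (A : ℚ[X]) = C (q : ℚ) * G := by
    refine mul_left_cancel₀ (pow_ne_zero k (C_ne_zero.2 (Nat.cast_ne_zero.2 hp))) ?_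
    rw [hA, Polynomial.map_mul, map_C, ← hG]
    simp only [eq_intCast]
    ring
  have hGint : IsIntValued G := by
    refine IsIntValued.of_isCoprime (b := (p : ℤ) ^ k) hqp.pow_right ?_ ?_
    · rw [← hAG]
      exact ((hRp A).1 A.2).1
    · push_cast
      rw [C_pow, hG]
      exact isIntValued_map_intCast a'
  exact ⟨⟨G, (hRp G).2 ⟨hGint, a', k, rfl⟩⟩, Subtype.ext (by simp [hQ, hAG])⟩

theorem C_dvd_or_C_dvd_of_mul_eq (hq : Prime q) (hqp : IsCoprime q p) {A B D : ℚ[X]}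
    {a b d : ℤ[X]} {k l m : ℕ} (hA : C (p : ℚ) ^ k * A = a.map (Int.castRingHom ℚ))
    (hB : C (p : ℚ) ^ l * B = b.map (Int.castRingHom ℚ))
    (hD : C (p : ℚ) ^ m * D = d.map (Int.castRingHom ℚ)) (hABD : A * B = C (q : ℚ) * D) :
    C q ∣ a ∨ C q ∣ b := by
  have hZ : C (p : ℤ) ^ m * (a * b) = C q * d * C (p : ℤ) ^ (k + l) := by
    apply map_injective (Int.castRingHom ℚ) Int.cast_injective
    simp only [Polynomial.map_mul, Polynomial.map_pow, map_C]
    simp only [eq_intCast, Int.cast_natCast, ← hA, ← hB, ← hD]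
    linear_combination C (p : ℚ) ^ (k + l + m) * hABD
  have hCq : Prime (C q) := prime_C_iff.2 hq
  have hpow : ¬C q ∣ C (p : ℤ) ^ m := fun h ↦ by
    have hdvd := (C_dvd_iff_dvd_coeff _ _).1 h 0
    rw [← C_pow, coeff_C_zero] at hdvd
    exact hq.not_isUnit (hqp.pow_right.isUnit_of_dvd' dvd_rfl hdvd)
  have hab : C q ∣ C (p : ℤ) ^ m * (a * b) := ⟨d * C (p : ℤ) ^ (k + l), by rw [hZ]; ring⟩
  exact hCq.dvd_or_dvd ((hCq.dvd_or_dvd hab).resolve_left hpow)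

end

theorem stmt_11 (p : ℕ) (hp : p.Prime) (Rp : Subring (Polynomial ℚ))
    (hRp : ∀ f : Polynomial ℚ, f ∈ Rp ↔
      ((∀ n : ℤ, ∃ m : ℤ, f.eval (n : ℚ) = (m : ℚ)) ∧
        ∃ (g : Polynomial ℤ) (k : ℕ),
          f = Polynomial.C (((p : ℚ)) ^ k)⁻¹ * g.map (Int.castRingHom ℚ)))
    (q : ℕ) (hq : q.Prime) (hqp : q ≠ p) :
    ∀ Q : Rp, (Q : Polynomial ℚ) = Polynomial.C (q : ℚ) → Prime Q := by
  intro Q hQ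
  have hqZ : Prime (q : ℤ) := Nat.prime_iff_prime_int.mp hq
  have hcop : IsCoprime (q : ℤ) p := Nat.isCoprime_iff_coprime.2 ((Nat.coprime_primes hq hp).2 hqp)
  have hQ' : (Q : ℚ[X]) = C ((q : ℤ) : ℚ) := by rw [hQ, Int.cast_natCast]
  refine ⟨fun h0 ↦ ?_, not_isUnit_of_coe_eq_C (fun f hf ↦ ((hRp f).1 hf).1) hQ' hqZ.not_isUnit, ?_⟩
  · simpa [hQ, hq.ne_zero] using congrArg Subtype.val h0
  rintro A B ⟨D, hD⟩
  obtain ⟨a, k, hA⟩ := HasPowDenom.exists_pow_mul_eq hp.ne_zero ((hRp A).1 A.2).2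
  obtain ⟨b, l, hB⟩ := HasPowDenom.exists_pow_mul_eq hp.ne_zero ((hRp B).1 B.2).2
  obtain ⟨d, m, hD'⟩ := HasPowDenom.exists_pow_mul_eq hp.ne_zero ((hRp D).1 D.2).2
  have hABD : (A : ℚ[X]) * B = C ((q : ℤ) : ℚ) * D := by
    simpa [hQ'] using congrArg Subtype.val hD
  exact (C_dvd_or_C_dvd_of_mul_eq hqZ hcop hA hB hD' hABD).imp
    (dvd_of_C_dvd_numerator hRp hp.ne_zero hcop hQ' hA)
    (dvd_of_C_dvd_numerator hRp hp.ne_zero hcop hQ' hB)
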